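/- arXiv:1402.6115 — 3 statements merged into one kernel-verified Lean document; each statement's English description precedes it below -/
import Mathlib

section
/- In a group G = ⟨X⟩, any commutator [u, p] = u^{-1}p^{-1}up with p a palindrome is a product of at most 3 palindromes. -/
/-- An element `g` of a group `G` is a palindrome with respect to a generating set `X`
if it is represented by a word in the alphabet `X^{±1}` that equals its own reversal. -/
def IsPalindrome {G : Type*} [Group G] (X : Set G) (g : G) : Prop :=
  ∃ w : List G, (∀ x ∈ w, x ∈ X ∨ x⁻¹ ∈ X) ∧ w.reverse = w ∧ w.prod = g

/-- `g` is a product of `k` palindromes with respect to `X`. -/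
def IsProdOfPalindromes {G : Type*} [Group G] (X : Set G) (k : ℕ) (g : G) : Prop :=
  ∃ l : List G, l.length = k ∧ (∀ p ∈ l, IsPalindrome X p) ∧ l.prod = g

theorem Subgroup.exists_list_of_mem_closure {G : Type*} [Group G] {X : Set G} {g : G}
    (hg : g ∈ Subgroup.closure X) : ∃ w : List G, (∀ x ∈ w, x ∈ X ∨ x⁻¹ ∈ X) ∧ w.prod = g := by
  have hg' : g ∈ Submonoid.closure (X ∪ X⁻¹) := by
    rwa [← Subgroup.closure_toSubmonoid]
  obtain ⟨w, hw, rfl⟩ := Submonoid.exists_list_of_mem_closure hg'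
  exact ⟨w, hw, rfl⟩

namespace IsPalindrome

variable {G : Type*} [Group G] {X : Set G} {p : G}

theorem one : IsPalindrome X (1 : G) :=
  ⟨[], by simp, rfl, rfl⟩

theorem inv (hp : IsPalindrome X p) : IsPalindrome X p⁻¹ := by
  obtain ⟨q, hq, hqrev, rfl⟩ := hp
  refine ⟨(q.map (·⁻¹)).reverse, ?_, ?_, (List.prod_inv_reverse q).symm⟩
  · simp only [List.mem_reverse, List.mem_map]
    rintro _ ⟨x, hx, rfl⟩
    simpa [or_comm] using hq x hx
  · rw [List.reverse_reverse, ← List.map_reverse, hqrev]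

theorem prod_mul_mul_prod_reverse {w : List G} (hw : ∀ x ∈ w, x ∈ X ∨ x⁻¹ ∈ X)
    (hp : IsPalindrome X p) : IsPalindrome X (w.prod * p * w.reverse.prod) := by
  obtain ⟨q, hq, hqrev, rfl⟩ := hp
  refine ⟨w ++ q ++ w.reverse, ?_, ?_, by simp [List.prod_append, mul_assoc]⟩
  · simp only [List.mem_append, List.mem_reverse]
    rintro x ((hx | hx) | hx)
    exacts [hw x hx, hq x hx, hw x hx]
  · simp [hqrev]

end IsPalindrome

open scoped commutatorElement

theorem commutator_palindrome_three {G : Type*} [Group G] (X : Set G)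
    (hX : Subgroup.closure X = ⊤) (u p : G) (hp : IsPalindrome X p) :
    ∃ k ≤ 3, IsProdOfPalindromes X k ⁅u, p⁆ := by
  obtain ⟨w, hw, rfl⟩ := Subgroup.exists_list_of_mem_closure (hX ▸ Subgroup.mem_top u)
  set v := w.reverse.prod
  -- v is u read backwards, so u p v and u v = u 1 v are palindromes; ⁅u, p⁆ = (u p v) (u v)⁻¹ p⁻¹
  refine ⟨3, le_rfl, [w.prod * p * v, (w.prod * v)⁻¹, p⁻¹], rfl, ?_, ?_⟩
  · have huv : IsPalindrome X (w.prod * v) := by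
      simpa using IsPalindrome.one.prod_mul_mul_prod_reverse hw
    simp only [List.mem_cons, List.not_mem_nil, or_false]
    rintro _ (rfl | rfl | rfl)
    exacts [hp.prod_mul_mul_prod_reverse hw, huv.inv, hp.inv]
  · simp only [List.prod_cons, List.prod_nil, mul_one, commutatorElement_def]
    group
end

section
/- Let G = ⟨X⟩ be a group, p_1,...,p_k palindromes, and u ∈ G. Then the palindromic length of the commutator [u, p_1 p_2 ⋯ p_k] is at most 2k if k is even and at most 2k+1 if k is odd. -/
section Palindromes

variable {G : Type*} [Group G] {X : Set G}

lemma isPalindrome_one : IsPalindrome X (1 : G) :=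
  ⟨[], by simp, rfl, rfl⟩

lemma IsPalindrome.inv_s6 {p : G} (hp : IsPalindrome X p) : IsPalindrome X p⁻¹ := by
  obtain ⟨w, hw, hrev, rfl⟩ := hp
  refine ⟨w.map (·⁻¹), ?_, by rw [← List.map_reverse, hrev], ?_⟩
  · simp only [List.mem_map, forall_exists_index, and_imp, forall_apply_eq_imp_iff₂, inv_inv]
    exact fun x hx => (hw x hx).symm
  · rw [List.prod_inv_reverse, ← List.map_reverse, hrev]

lemma IsPalindrome.reverse_prod_mul_mul_prod {p : G} (hp : IsPalindrome X p) {s : List G}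
    (hs : ∀ x ∈ s, x ∈ X ∨ x⁻¹ ∈ X) : IsPalindrome X (s.reverse.prod * p * s.prod) := by
  obtain ⟨w, hw, hrev, rfl⟩ := hp
  refine ⟨s.reverse ++ w ++ s, ?_, by simp [hrev], by simp [mul_assoc]⟩
  simp only [List.mem_append, List.mem_reverse]
  rintro x ((hx | hx) | hx)
  exacts [hs x hx, hw x hx, hs x hx]

lemma IsPalindrome.isProdOfPalindromes_one {p : G} (hp : IsPalindrome X p) :
    IsProdOfPalindromes X 1 p :=
  ⟨[p], rfl, by simpa using hp, by simp⟩

lemma isProdOfPalindromes_zero : IsProdOfPalindromes X 0 (1 : G) :=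
  ⟨[], rfl, by simp, rfl⟩

lemma isProdOfPalindromes_prod {l : List G} (hl : ∀ p ∈ l, IsPalindrome X p) :
    IsProdOfPalindromes X l.length l.prod :=
  ⟨l, rfl, hl, rfl⟩

lemma IsProdOfPalindromes.mul {m n : ℕ} {g h : G} (hg : IsProdOfPalindromes X m g)
    (hh : IsProdOfPalindromes X n h) : IsProdOfPalindromes X (m + n) (g * h) := by
  obtain ⟨l, rfl, hl, rfl⟩ := hg
  obtain ⟨l', rfl, hl', rfl⟩ := hh
  exact ⟨l ++ l', List.length_append, by simpa [or_imp, forall_and] using ⟨hl, hl'⟩,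
    List.prod_append⟩

lemma IsProdOfPalindromes.inv_s6 {k : ℕ} {g : G} (hg : IsProdOfPalindromes X k g) :
    IsProdOfPalindromes X k g⁻¹ := by
  obtain ⟨l, rfl, hl, rfl⟩ := hg
  refine ⟨(l.map (·⁻¹)).reverse, by simp, ?_, (List.prod_inv_reverse l).symm⟩
  simp only [List.mem_reverse, List.mem_map, forall_exists_index, and_imp,
    forall_apply_eq_imp_iff₂]
  exact fun p hp => (hl p hp).inv_s6

lemma isProdOfPalindromes_inv_mul_prod_mul {a b : G}
    (hab : ∀ p, IsPalindrome X p → IsPalindrome X (b * p * a)) :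
    ∀ l : List G, (∀ p ∈ l, IsPalindrome X p) →
      IsProdOfPalindromes X (l.length + if Even l.length then 0 else 1) (a⁻¹ * l.prod * a)
  | [], _ => by simpa using isProdOfPalindromes_zero
  | [p], hl => by
    have hfirst : IsPalindrome X (a⁻¹ * p * b⁻¹) := by
      simpa [mul_assoc] using (hab _ (hl p (by simp)).inv_s6).inv_s6
    have hlast : IsPalindrome X (b * a) := by simpa using hab 1 isPalindrome_one
    simpa [mul_assoc] using hfirst.isProdOfPalindromes_one.mul hlast.isProdOfPalindromes_one
  | p :: q :: t, hl => by
    have hfirst : IsPalindrome X (a⁻¹ * p * b⁻¹) := by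
      simpa [mul_assoc] using (hab _ (hl p (by simp)).inv_s6).inv_s6
    have hsecond : IsPalindrome X (b * q * a) := hab q (hl q (by simp))
    have htail := isProdOfPalindromes_inv_mul_prod_mul hab t (fun r hr => hl r (by simp [hr]))
    have hall := (hfirst.isProdOfPalindromes_one.mul hsecond.isProdOfPalindromes_one).mul htail
    convert hall using 1
    · simp only [List.length_cons, Nat.even_add_one, not_not]
      omega
    · simp only [List.prod_cons]
      group

lemma exists_word_eq_of_closure_eq_top (hX : Subgroup.closure X = ⊤) (g : G) :
    ∃ s : List G, (∀ x ∈ s, x ∈ X ∨ x⁻¹ ∈ X) ∧ s.prod = g := by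
  have hg : g ∈ (Subgroup.closure X).toSubmonoid := by simp [hX]
  rw [Subgroup.closure_toSubmonoid] at hg
  exact Submonoid.exists_list_of_mem_closure hg

end Palindromes

open scoped commutatorElement

theorem commutator_prod_palindromes_bound {G : Type*} [Group G] (X : Set G)
    (hX : Subgroup.closure X = ⊤) (u : G) (k : ℕ) (ps : List G)
    (hlen : ps.length = k) (hps : ∀ p ∈ ps, IsPalindrome X p) :
    ∃ j ≤ 2 * k + (if Even k then 0 else 1), IsProdOfPalindromes X j ⁅u, ps.prod⁆ := by
  obtain ⟨s, hs, hsu⟩ := exists_word_eq_of_closure_eq_top hX u⁻¹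
  have hconj := isProdOfPalindromes_inv_mul_prod_mul
    (fun p hp => hp.reverse_prod_mul_mul_prod hs) ps hps
  have hinv := (isProdOfPalindromes_prod hps).inv_s6
  rw [hsu, inv_inv] at hconj
  rw [commutatorElement_def]
  exact ⟨_, by rw [hlen]; omega, hconj.mul hinv⟩
end

section
/- In G = Z ≀ Z with generators a (base) and b (top), every element is a product of at most 3 palindromes with respect to {a, b}. -/
lemma emd_one (x : ℤ →₀ ℤ) : Finsupp.equivMapDomain (1 : Equiv.Perm ℤ) x = x := by
  ext i; simp [Finsupp.equivMapDomain_apply]; rfl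

lemma emd_mul (e f : Equiv.Perm ℤ) (x : ℤ →₀ ℤ) :
    Finsupp.equivMapDomain (e * f) x = Finsupp.equivMapDomain e (Finsupp.equivMapDomain f x) := by
  ext i; simp [Finsupp.equivMapDomain_apply]; rfl

/-- The shift automorphism of the base group of `ℤ ≀ ℤ`. -/
noncomputable def shiftAut (k : ℤ) : Multiplicative (ℤ →₀ ℤ) ≃* Multiplicative (ℤ →₀ ℤ) :=
  AddEquiv.toMultiplicative (Finsupp.domCongr (Equiv.addRight k))

/-- The action of the top group `ℤ` on the base group `⨁_{i ∈ ℤ} ℤ` by shifting indices. -/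
noncomputable def wrφ : Multiplicative ℤ →* MulAut (Multiplicative (ℤ →₀ ℤ)) where
  toFun k := shiftAut k.toAdd
  map_one' := by
    ext f
    simp [shiftAut, Finsupp.domCongr_apply, emd_one]
  map_mul' k l := by
    ext f
    simp [shiftAut, Finsupp.domCongr_apply, MulAut.mul_apply, emd_mul]
    ring_nf

/-- The restricted wreath product `ℤ ≀ ℤ`, realized as the semidirect product
of the base group `⨁_{i ∈ ℤ} ℤ` by `ℤ` acting by shifts. -/
noncomputable abbrev ZwrZ : Type :=
  SemidirectProduct (Multiplicative (ℤ →₀ ℤ)) (Multiplicative ℤ) wrφ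

/-- The standard generator `a` of `ℤ ≀ ℤ` (generator of the 0-th base copy of `ℤ`). -/
noncomputable def aGen : ZwrZ := SemidirectProduct.inl (Multiplicative.ofAdd (Finsupp.single 0 1))

/-- The standard generator `b` of `ℤ ≀ ℤ` (generator of the acting copy of `ℤ`). -/
noncomputable def bGen : ZwrZ := SemidirectProduct.inr (Multiplicative.ofAdd 1)

/-- The embedding of a base-group element `c = (n_i)_{i ∈ ℤ}` into `ℤ ≀ ℤ`. -/
noncomputable def base (c : ℤ →₀ ℤ) : ZwrZ := SemidirectProduct.inl (Multiplicative.ofAdd c)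

/-! Write `δ_m = single m 1`, so that every element is `base c * b^k`. Sandwiching a palindrome
between the word `b^m a^t b^{-m}`, which is `base (t δ_m)`, and its reversal `base (t δ_{-m})`
turns the palindrome `base c * b^k` into `base (c + t (δ_m + δ_{k-m})) * b^k`. Starting from `a^t`
and from `b`, this makes `base u` a palindrome for `u ∈ ℤ δ_0 + ⟨δ_m + δ_{-m}⟩` and `base v * b`
one for `v ∈ ⟨δ_m + δ_{1-m}⟩`. These two subgroups span the base group, as
`δ_m - δ_{m+1} = (δ_m + δ_{-m}) - (δ_{-m} + δ_{m+1})`; hence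
`base (u + v) * b^k = base u * (base v * b) * b^{k-1}` is a product of three palindromes. -/

namespace IsPalindrome

variable {G : Type*} [Group G] {X : Set G}

theorem pow {x : G} (hx : x ∈ X ∨ x⁻¹ ∈ X) (n : ℕ) : IsPalindrome X (x ^ n) :=
  ⟨List.replicate n x, fun _ hy => List.eq_of_mem_replicate hy ▸ hx, List.reverse_replicate,
    List.prod_replicate _ _⟩

theorem zpow {x : G} (hx : x ∈ X ∨ x⁻¹ ∈ X) (n : ℤ) : IsPalindrome X (x ^ n) := by
  obtain ⟨n, rfl | rfl⟩ := Int.eq_nat_or_neg n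
  · simpa using pow hx n
  · simpa using pow (x := x⁻¹) (by rwa [inv_inv, or_comm]) n

theorem mul_mul_self {x p : G} (hx : x ∈ X ∨ x⁻¹ ∈ X) (hp : IsPalindrome X p) :
    IsPalindrome X (x * p * x) := by
  obtain ⟨w, hw, hrev, rfl⟩ := hp
  refine ⟨[x] ++ w ++ [x], ?_, by simp [hrev], by simp [mul_assoc]⟩
  simp only [List.mem_append, List.mem_singleton]
  rintro y ((rfl | hy) | rfl)
  exacts [hx, hw y hy, hx]

theorem pow_mul_mul_pow {x p : G} (hx : x ∈ X ∨ x⁻¹ ∈ X) (hp : IsPalindrome X p) (n : ℕ) :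
    IsPalindrome X (x ^ n * p * x ^ n) := by
  induction n with
  | zero => simpa using hp
  | succ n ih =>
    convert mul_mul_self hx ih using 1
    group

theorem zpow_mul_mul_zpow {x p : G} (hx : x ∈ X ∨ x⁻¹ ∈ X) (hp : IsPalindrome X p) (n : ℤ) :
    IsPalindrome X (x ^ n * p * x ^ n) := by
  obtain ⟨n, rfl | rfl⟩ := Int.eq_nat_or_neg n
  · simpa using pow_mul_mul_pow hx hp n
  · simpa using pow_mul_mul_pow (x := x⁻¹) (by rwa [inv_inv, or_comm]) hp n

end IsPalindrome

open Finsupp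

theorem aGen_mem_or_inv_mem : aGen ∈ ({aGen, bGen} : Set ZwrZ) ∨ aGen⁻¹ ∈ ({aGen, bGen} : Set ZwrZ) :=
  Or.inl (Set.mem_insert _ _)

theorem bGen_mem_or_inv_mem : bGen ∈ ({aGen, bGen} : Set ZwrZ) ∨ bGen⁻¹ ∈ ({aGen, bGen} : Set ZwrZ) :=
  Or.inl (Set.mem_insert_of_mem _ rfl)

theorem base_add (c d : ℤ →₀ ℤ) : base (c + d) = base c * base d :=
  map_mul SemidirectProduct.inl _ _

theorem aGen_zpow (t : ℤ) : aGen ^ t = base (single 0 t) := by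
  rw [aGen, base, ← map_zpow, ← ofAdd_zsmul, smul_single, smul_eq_mul, mul_one]

theorem bGen_zpow (k : ℤ) : bGen ^ k = SemidirectProduct.inr (Multiplicative.ofAdd k) := by
  rw [bGen, ← map_zpow, ← ofAdd_zsmul, smul_eq_mul, mul_one]

theorem eq_base_mul_bGen_zpow (g : ZwrZ) :
    g = base (Multiplicative.toAdd g.left) * bGen ^ Multiplicative.toAdd g.right := by
  rw [bGen_zpow]
  exact (SemidirectProduct.inl_left_mul_inr_right g).symm

theorem bGen_zpow_mul_base_single_mul_bGen_zpow_neg (k i t : ℤ) :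
    bGen ^ k * base (single i t) * bGen ^ (-k) = base (single (i + k) t) := by
  rw [zpow_neg, bGen_zpow, ← map_inv, base, ← SemidirectProduct.inl_aut]
  exact congrArg (SemidirectProduct.inl ∘ Multiplicative.ofAdd) (equivMapDomain_single _ _ _)

theorem bGen_zpow_mul_aGen_zpow_mul_bGen_zpow_neg (m t : ℤ) :
    bGen ^ m * aGen ^ t * bGen ^ (-m) = base (single m t) := by
  rw [aGen_zpow, bGen_zpow_mul_base_single_mul_bGen_zpow_neg, zero_add]

theorem isPalindrome_base_add_single_add_single {c : ℤ →₀ ℤ} {k : ℤ}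
    (hc : IsPalindrome {aGen, bGen} (base c * bGen ^ k)) (m t : ℤ) :
    IsPalindrome {aGen, bGen} (base (c + (single m t + single (k - m) t)) * bGen ^ k) := by
  convert hc.zpow_mul_mul_zpow bGen_mem_or_inv_mem (-m) |>.zpow_mul_mul_zpow aGen_mem_or_inv_mem t
    |>.zpow_mul_mul_zpow bGen_mem_or_inv_mem m using 1
  calc base (c + (single m t + single (k - m) t)) * bGen ^ k
      = base (single m t) * base c * base (single (k - m) t) * bGen ^ k := by
        rw [← base_add, ← base_add, add_comm c, add_right_comm]
    _ = (bGen ^ m * aGen ^ t * bGen ^ (-m)) * base c *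
          (bGen ^ (k - m) * aGen ^ t * bGen ^ (-(k - m))) * bGen ^ k := by
        rw [bGen_zpow_mul_aGen_zpow_mul_bGen_zpow_neg, bGen_zpow_mul_aGen_zpow_mul_bGen_zpow_neg]
    _ = _ := by group

def mirrorPairs (k : ℤ) : Set (ℤ →₀ ℤ) :=
  Set.range fun p : ℤ × ℤ => single p.1 p.2 + single (k - p.1) p.2

theorem isPalindrome_base_add_mul_bGen_zpow {c d : ℤ →₀ ℤ} {k : ℤ}
    (hc : IsPalindrome {aGen, bGen} (base c * bGen ^ k))
    (hd : d ∈ AddSubgroup.closure (mirrorPairs k)) :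
    IsPalindrome {aGen, bGen} (base (c + d) * bGen ^ k) := by
  induction hd using AddSubgroup.closure_induction'' generalizing c with
  | mem _ hx =>
    obtain ⟨⟨m, t⟩, rfl⟩ := hx
    exact isPalindrome_base_add_single_add_single hc m t
  | neg_mem _ hx =>
    obtain ⟨⟨m, t⟩, rfl⟩ := hx
    simpa only [single_neg, neg_add] using isPalindrome_base_add_single_add_single hc m (-t)
  | zero => simpa using hc
  | add x y _ _ hx hy => simpa [add_assoc] using hy (hx hc)

theorem range_singleAddHom_sup_closure_mirrorPairs_eq_top :
    (singleAddHom 0).range ⊔ AddSubgroup.closure (mirrorPairs 0) ⊔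
      AddSubgroup.closure (mirrorPairs 1) = (⊤ : AddSubgroup (ℤ →₀ ℤ)) := by
  set A := (singleAddHom 0).range ⊔ AddSubgroup.closure (mirrorPairs 0) ⊔
      AddSubgroup.closure (mirrorPairs 1)
  have single_sub_single_mem (m t : ℤ) : single m t - single (m + 1) t ∈ A := by
    have h0 : single m t + single (0 - m) t ∈ A :=
      AddSubgroup.mem_sup_left (AddSubgroup.mem_sup_right (AddSubgroup.subset_closure ⟨(m, t), rfl⟩))
    have h1 : single (-m) t + single (1 - -m) t ∈ A :=
      AddSubgroup.mem_sup_right (AddSubgroup.subset_closure ⟨(-m, t), rfl⟩)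
    convert sub_mem h0 h1 using 1
    rw [zero_sub, sub_neg_eq_add, add_comm 1]
    abel
  have single_mem (m t : ℤ) : single m t ∈ A := by
    induction m using Int.induction_on with
    | zero => exact AddSubgroup.mem_sup_left (AddSubgroup.mem_sup_left ⟨t, rfl⟩)
    | succ i hi => simpa using sub_mem hi (single_sub_single_mem i t)
    | pred i hi => simpa using add_mem hi (single_sub_single_mem (-i - 1) t)
  refine (AddSubgroup.eq_top_iff' A).mpr fun c => ?_
  induction c using Finsupp.induction_linear with
  | zero => exact zero_mem A
  | add _ _ hf hg => exact add_mem hf hg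
  | single m t => exact single_mem m t

/-- Every element of `ℤ ≀ ℤ` is a product of at most 3 palindromes in the
generators `a`, `b`. -/
theorem ZwrZ_pw_le_three :
    ∀ g : ZwrZ, ∃ l : List ZwrZ, l.length ≤ 3 ∧
      (∀ p ∈ l, IsPalindrome {aGen, bGen} p) ∧ l.prod = g := by
  intro g
  obtain ⟨c, k, rfl⟩ : ∃ c k, g = base c * bGen ^ k := ⟨_, _, eq_base_mul_bGen_zpow g⟩
  obtain ⟨u, hu, v, hv, rfl⟩ := AddSubgroup.mem_sup.mp
    (range_singleAddHom_sup_closure_mirrorPairs_eq_top ▸ AddSubgroup.mem_top c)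
  obtain ⟨_, ⟨t, rfl⟩, d, hd, rfl⟩ := AddSubgroup.mem_sup.mp hu
  have ha : IsPalindrome {aGen, bGen} (base (single 0 t) * bGen ^ (0 : ℤ)) := by
    simpa [aGen_zpow] using IsPalindrome.zpow aGen_mem_or_inv_mem t
  have hb : IsPalindrome {aGen, bGen} (base 0 * bGen ^ (1 : ℤ)) := by
    simpa [base] using IsPalindrome.pow bGen_mem_or_inv_mem 1
  refine ⟨[base (single 0 t + d) * bGen ^ (0 : ℤ), base (0 + v) * bGen ^ (1 : ℤ), bGen ^ (k - 1)],
    by simp, ?_, ?_⟩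
  · simp only [List.mem_cons, List.not_mem_nil, or_false]
    rintro p (rfl | rfl | rfl)
    exacts [isPalindrome_base_add_mul_bGen_zpow ha hd, isPalindrome_base_add_mul_bGen_zpow hb hv,
      IsPalindrome.zpow bGen_mem_or_inv_mem _]
  · simp only [List.prod_cons, List.prod_nil, mul_one, zero_add, base_add, singleAddHom_apply]
    group
end
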